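/- arXiv:2604.15661 — 8 statements merged into one kernel-verified Lean document; each statement's English description precedes it below -/
import Mathlib

section
/- With A = (1/2)·(γ_G+γ_B)·D₀ + (1/2)·(1−γ_B)·y for any real D₀, the lender's unconditional expected payoff satisfies the identity ∫_{-1}^{0} [A + (1/2)·(−x)·((1−τ)·(1−κ)·L_B − (1−γ_B)·y)]·f(x) dx + ∫_{0}^{1} [A + (1/2)·x·((1−γ_G)·y + (1−τ)·(1−κ)·L_G)]·f(x) dx = A + (1/2)·((1−τ)·(1−κ) − 1)·(γ_G−γ_B)·y·∫_{0}^{1} x·f(x) dx, and this quantity is strictly less than A. -/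
/-!
On `[-1, 0]` substitute `x ↦ -x`: by symmetry of `f` both payoff integrals become integrals over
`[0, 1]` of an affine function of `x` against `f`. Symmetry also gives `∫₀¹ f = 1/2`, so the sum
is `A` plus half the first moment `∫₀¹ x f(x) dx` times the sum of the two slopes, and since
`L_G + L_B = (γ_G - γ_B) y` that sum is `((1-τ)(1-κ) - 1)(γ_G - γ_B) y < 0`, while the first
moment is positive.
-/

open MeasureTheory intervalIntegral Set

variable {f : ℝ → ℝ}

theorem Function.Even.integral_neg_zero_comp_neg_mul (hf : f.Even) (g : ℝ → ℝ) (a : ℝ) :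
    ∫ x in -a..0, g (-x) * f x = ∫ x in 0..a, g x * f x := by
  have h := integral_comp_neg (a := -a) (b := 0) (fun x => g x * f x)
  simp only [hf _, neg_zero, neg_neg] at h
  exact h

theorem Function.Even.integral_zero_eq_half_integral_symm (hf : f.Even) (hc : Continuous f)
    (a : ℝ) :
    ∫ x in 0..a, f x = (∫ x in -a..a, f x) / 2 := by
  have h := hf.integral_neg_zero_comp_neg_mul 1 a
  simp only [Pi.one_apply, one_mul] at h
  rw [← integral_add_adjacent_intervals (hc.intervalIntegrable (-a) 0)
    (hc.intervalIntegrable 0 a), h]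
  ring

theorem integral_affine_mul (hf : Continuous f) (a b c d e : ℝ) :
    ∫ x in a..b, (c + d * x * e) * f x
      = c * (∫ x in a..b, f x) + d * e * ∫ x in a..b, x * f x := by
  have hsplit : ∀ x, (c + d * x * e) * f x = c * f x + d * e * (x * f x) := fun x => by ring
  simp_rw [hsplit]
  rw [integral_add ((hf.intervalIntegrable a b).const_mul c)
      ((by fun_prop : Continuous fun x => x * f x).intervalIntegrable a b |>.const_mul (d * e)),
    intervalIntegral.integral_const_mul, intervalIntegral.integral_const_mul]

theorem integral_id_mul_pos (hf : Continuous f) {a : ℝ} (ha : 0 < a)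
    (hpos : ∀ x ∈ Ioo 0 a, 0 < f x) : 0 < ∫ x in 0..a, x * f x :=
  intervalIntegral_pos_of_pos_on
    ((by fun_prop : Continuous fun x => x * f x).intervalIntegrable 0 a)
    (fun x hx => mul_pos hx.1 (hpos x hx)) ha

theorem stmt_2_general (f : ℝ → ℝ)
    (hf_total : (∫ x in (-1 : ℝ)..1, f x) = 1)
    (hf_symm : ∀ x, f x = f (-x))
    (hf_cont : Continuous f)
    (hf_pos : ∀ x ∈ Set.Ioo (-1 : ℝ) 1, 0 < f x)
    (γB γG y X τ κ LG LB A : ℝ)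
    (hγ : γB < γG)
    (hy : 0 < y) (hτ0 : 0 ≤ τ)
    (hκ0 : 0 < κ) (hκ1 : κ < 1)
    (hLG : LG = X - (1 - γG) * y)
    (hLB : LB = (1 - γB) * y - X) :
    ((∫ x in (-1 : ℝ)..0, (A + (1/2) * (-x) * ((1-τ)*(1-κ)*LB - (1-γB)*y)) * f x)
      + (∫ x in (0 : ℝ)..1, (A + (1/2) * x * ((1-γG)*y + (1-τ)*(1-κ)*LG)) * f x)
      = A + (1/2) * ((1-τ)*(1-κ) - 1) * (γG - γB) * y * (∫ x in (0 : ℝ)..1, x * f x)) ∧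
    A + (1/2) * ((1-τ)*(1-κ) - 1) * (γG - γB) * y * (∫ x in (0 : ℝ)..1, x * f x) < A := by
  have hf_even : f.Even := fun x => (hf_symm x).symm
  have hmass : ∫ x in (0 : ℝ)..1, f x = 1 / 2 := by
    rw [hf_even.integral_zero_eq_half_integral_symm hf_cont, hf_total]
  have hmoment : 0 < ∫ x in (0 : ℝ)..1, x * f x :=
    integral_id_mul_pos hf_cont one_pos fun x hx => hf_pos x ⟨by linarith [hx.1], hx.2⟩
  have hleft := hf_even.integral_neg_zero_comp_neg_mul
    (fun t => A + 1 / 2 * t * ((1 - τ) * (1 - κ) * LB - (1 - γB) * y)) 1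
  beta_reduce at hleft
  refine ⟨?_, ?_⟩
  · rw [hleft, integral_affine_mul hf_cont, integral_affine_mul hf_cont, hmass, hLG, hLB]
    ring
  · have hdiscount : (1 - τ) * (1 - κ) < 1 := by nlinarith
    have hspread : 0 < (γG - γB) * y := mul_pos (sub_pos.2 hγ) hy
    nlinarith [mul_pos (mul_pos (sub_pos.2 hdiscount) hspread) hmoment]

/-- The lender's unconditional expected payoff across false-alarm and
undue-optimism errors equals A + (1/2)·((1−τ)(1−κ)−1)·(γ_G−γ_B)·y·∫₀¹ x f(x) dx,
which is strictly less than A. -/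
theorem stmt_2 (f : ℝ → ℝ)
    (hf_nonneg : ∀ x, 0 ≤ f x)
    (hf_supp : ∀ x : ℝ, x ∉ Set.Icc (-1 : ℝ) 1 → f x = 0)
    (hf_total : (∫ x in (-1 : ℝ)..1, f x) = 1)
    (hf_symm : ∀ x, f x = f (-x))
    (hf_cont : Continuous f)
    (hf_pos : ∀ x ∈ Set.Ioo (-1 : ℝ) 1, 0 < f x)
    (γB γG y X τ κ LG LB D₀ A : ℝ)
    (hγB : 0 ≤ γB) (hγ : γB < γG) (hγG : γG < 1)
    (hy : 0 < y) (hX : 0 < X) (hτ0 : 0 ≤ τ) (hτ1 : τ ≤ 1)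
    (hκ0 : 0 < κ) (hκ1 : κ < 1)
    (hLG : LG = X - (1 - γG) * y) (hLGpos : 0 < LG)
    (hLB : LB = (1 - γB) * y - X) (hLBpos : 0 < LB)
    (hA : A = (1/2) * (γG + γB) * D₀ + (1/2) * (1 - γB) * y) :
    ((∫ x in (-1 : ℝ)..0, (A + (1/2) * (-x) * ((1-τ)*(1-κ)*LB - (1-γB)*y)) * f x)
      + (∫ x in (0 : ℝ)..1, (A + (1/2) * x * ((1-γG)*y + (1-τ)*(1-κ)*LG)) * f x)
      = A + (1/2) * ((1-τ)*(1-κ) - 1) * (γG - γB) * y * (∫ x in (0 : ℝ)..1, x * f x)) ∧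
    A + (1/2) * ((1-τ)*(1-κ) - 1) * (γG - γB) * y * (∫ x in (0 : ℝ)..1, x * f x) < A :=
  stmt_2_general f hf_total hf_symm hf_cont hf_pos γB γG y X τ κ LG LB A hγ hy hτ0 hκ0 hκ1 hLG hLB
end

section
/- Let p ∈ (0,1) and x* ∈ (-1,0) with F(x*) > 0. Define A(D) = (1/2)·(γ_G+γ_B)·D + (1/2)·(1−γ_B)·y, g(x) = (1/2)·(−x)·((1−τ)·(1−κ)·L_B − (1−γ_B)·y) for x ≤ 0 and g(x) = (1/2)·x·((1−γ_G)·y + (1−τ)·(1−κ)·L_G) for x > 0, V_∅(D₀) = ∫_{-1}^{1} (A(D₀) + g(x))·f(x) dx, and V_w(D₀) = (1/F(x*))·∫_{-1}^{x*} (A(D₀) + g(x))·f(x) dx. Suppose D₀ satisfies the lender's break-even condition (1−p)·V_∅(D₀) + p·F(x*)·V_w(D₀) = (1 − p + p·F(x*))·K and D₁ satisfies A(D₁) = K. Then D₀ > D₁, and moreover V_∅(D₀) > K. -/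
open MeasureTheory

/-!
Writing `G = ∫ g f` over `[-1, 1]` and `G_w = ∫ g f` over `[-1, x*]`, both values are affine in
`A(D₀)`, and the break-even condition rearranges to
`(1 - p + p F(x*)) (V_∅(D₀) - K) = p (F(x*) G - G_w)`.
The right-hand side is positive because `g` is increasing, strictly so below `0`: the mean of `g`
over the lower tail `[-1, x*]` is below `g(x*)`, which is at most its mean over `[x*, 1]`.
Hence `V_∅(D₀) > K`. Since `g` rises more slowly to the right of `0` than it falls to the left
and `f` is symmetric, `G ≤ 0`, so `A(D₀) = V_∅(D₀) - G > K = A(D₁)`, and `A` is increasing.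
-/

section WeightedMean

variable {f g : ℝ → ℝ} {a b c : ℝ}

theorem integral_mul_lt_mul_integral_of_strictMonoOn (hf : Continuous f) (hg : Continuous g)
    (hac : a < c) (hpos : ∀ x ∈ Set.Ioo a c, 0 < f x) (hmono : StrictMonoOn g (Set.Icc a c)) :
    ∫ x in a..c, g x * f x < g c * ∫ x in a..c, f x := by
  have hcf : Continuous fun x => g c * f x := by fun_prop
  have hgf : Continuous fun x => g x * f x := by fun_prop
  rw [← intervalIntegral.integral_const_mul, ← sub_pos, ← intervalIntegral.integral_sub
    (hcf.intervalIntegrable _ _) (hgf.intervalIntegrable _ _)]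
  refine intervalIntegral.intervalIntegral_pos_of_pos_on
    ((hcf.sub hgf).intervalIntegrable _ _) (fun x hx => ?_) hac
  have hgx : g x < g c := hmono (Set.Ioo_subset_Icc_self hx) ⟨hac.le, le_rfl⟩ hx.2
  nlinarith [hpos x hx]

theorem mul_integral_le_integral_mul_of_monotoneOn (hf : Continuous f) (hg : Continuous g)
    (hcb : c ≤ b) (hnonneg : ∀ x ∈ Set.Ioo c b, 0 ≤ f x) (hmono : MonotoneOn g (Set.Icc c b)) :
    g c * ∫ x in c..b, f x ≤ ∫ x in c..b, g x * f x := by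
  have hcf : Continuous fun x => g c * f x := by fun_prop
  have hgf : Continuous fun x => g x * f x := by fun_prop
  rw [← intervalIntegral.integral_const_mul]
  refine intervalIntegral.integral_mono_on_of_le_Ioo hcb
    (hcf.intervalIntegrable _ _) (hgf.intervalIntegrable _ _)
    fun x hx => mul_le_mul_of_nonneg_right ?_ (hnonneg x hx)
  exact hmono ⟨le_rfl, hcb⟩ (Set.Ioo_subset_Icc_self hx) hx.1.le

/-- The `f`-weighted mean of `g` over the lower part `[a, c]` is below its mean over `[a, b]`. -/
theorem integral_mul_integral_lt_of_monotoneOn (hf : Continuous f) (hg : Continuous g)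
    (hac : a < c) (hcb : c < b) (hpos : ∀ x ∈ Set.Ioo a b, 0 < f x)
    (hstrict : StrictMonoOn g (Set.Icc a c)) (hmono : MonotoneOn g (Set.Icc c b)) :
    (∫ x in a..c, g x * f x) * ∫ x in a..b, f x < (∫ x in a..c, f x) * ∫ x in a..b, g x * f x := by
  have hpos_lower : ∀ x ∈ Set.Ioo a c, 0 < f x := fun x hx => hpos x ⟨hx.1, hx.2.trans hcb⟩
  have hpos_upper : ∀ x ∈ Set.Ioo c b, 0 < f x := fun x hx => hpos x ⟨hac.trans hx.1, hx.2⟩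
  have hlower := integral_mul_lt_mul_integral_of_strictMonoOn hf hg hac hpos_lower hstrict
  have hupper := mul_integral_le_integral_mul_of_monotoneOn hf hg hcb.le
    (fun x hx => (hpos_upper x hx).le) hmono
  have hJ : 0 < ∫ x in a..c, f x :=
    intervalIntegral.intervalIntegral_pos_of_pos_on (hf.intervalIntegrable _ _) hpos_lower hac
  have hT : 0 < ∫ x in c..b, f x :=
    intervalIntegral.intervalIntegral_pos_of_pos_on (hf.intervalIntegrable _ _) hpos_upper hcb
  have hgf : Continuous fun x => g x * f x := by fun_prop
  rw [← intervalIntegral.integral_add_adjacent_intervals (hf.intervalIntegrable a c)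
      (hf.intervalIntegrable c b),
    ← intervalIntegral.integral_add_adjacent_intervals (hgf.intervalIntegrable a c)
      (hgf.intervalIntegrable c b)]
  nlinarith [mul_lt_mul_of_pos_left hlower hT, mul_le_mul_of_nonneg_left hupper hJ.le]

end WeightedMean

theorem integral_mul_nonpos_of_symmetric {f g : ℝ → ℝ} {a : ℝ} (hf : Continuous f)
    (hg : Continuous g) (hsymm : ∀ x, f x = f (-x)) (ha : 0 ≤ a)
    (hnonneg : ∀ x ∈ Set.Ioo 0 a, 0 ≤ f x) (hsum : ∀ x ∈ Set.Ioo 0 a, g (-x) + g x ≤ 0) :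
    ∫ x in -a..a, g x * f x ≤ 0 := by
  have hgf : Continuous fun x => g x * f x := by fun_prop
  have hgf' : Continuous fun x => g (-x) * f x := by fun_prop
  have hfold_cont : Continuous fun x => (g (-x) + g x) * f x := by fun_prop
  have hreflect : ∫ x in -a..0, g x * f x = ∫ x in 0..a, g (-x) * f x := by
    simpa [← hsymm] using
      (intervalIntegral.integral_comp_neg (a := 0) (b := a) fun x => g x * f x).symm
  have hfold : ∫ x in -a..a, g x * f x = ∫ x in 0..a, (g (-x) + g x) * f x := by
    simp_rw [add_mul]
    rw [← intervalIntegral.integral_add_adjacent_intervals (hgf.intervalIntegrable _ 0)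
      (hgf.intervalIntegrable 0 _), hreflect, intervalIntegral.integral_add
      (hgf'.intervalIntegrable _ _) (hgf.intervalIntegrable _ _)]
  rw [hfold]
  refine (intervalIntegral.integral_mono_on_of_le_Ioo (μ := volume) ha
    (hfold_cont.intervalIntegrable _ _) intervalIntegrable_const
    fun x hx => mul_nonpos_of_nonpos_of_nonneg (hsum x hx) (hnonneg x hx)).trans_eq
    intervalIntegral.integral_zero

theorem intervalIntegral_add_mul {f g : ℝ → ℝ} {a b : ℝ} (hf : Continuous f) (hg : Continuous g)
    (k : ℝ) :
    ∫ x in a..b, (k + g x) * f x = k * (∫ x in a..b, f x) + ∫ x in a..b, g x * f x := by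
  have hkf : Continuous fun x => k * f x := by fun_prop
  have hgf : Continuous fun x => g x * f x := by fun_prop
  simp_rw [add_mul]
  rw [intervalIntegral.integral_add (hkf.intervalIntegrable _ _) (hgf.intervalIntegrable _ _),
    intervalIntegral.integral_const_mul]

def kinkedLinear (s t x : ℝ) : ℝ := s * min x 0 + t * max x 0

section KinkedLinear

variable {s t : ℝ}

theorem kinkedLinear_eq_ite (x : ℝ) :
    kinkedLinear s t x = if x ≤ 0 then s * x else t * x := by
  unfold kinkedLinear
  split_ifs with hx
  · rw [min_eq_left hx, max_eq_right hx, mul_zero, add_zero]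
  · rw [min_eq_right (le_of_not_ge hx), max_eq_left (le_of_not_ge hx), mul_zero, zero_add]

theorem continuous_kinkedLinear : Continuous (kinkedLinear s t) := by
  unfold kinkedLinear; fun_prop

theorem monotone_kinkedLinear (hs : 0 ≤ s) (ht : 0 ≤ t) : Monotone (kinkedLinear s t) :=
  fun x y hxy => by
    unfold kinkedLinear
    gcongr

theorem strictMonoOn_kinkedLinear (hs : 0 < s) : StrictMonoOn (kinkedLinear s t) (Set.Iic 0) :=
  fun x hx y hy hxy => by
    rw [kinkedLinear_eq_ite, kinkedLinear_eq_ite, if_pos (Set.mem_Iic.1 hx),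
      if_pos (Set.mem_Iic.1 hy)]
    exact mul_lt_mul_of_pos_left hxy hs

theorem kinkedLinear_neg_add_self {u : ℝ} (hu : 0 ≤ u) :
    kinkedLinear s t (-u) + kinkedLinear s t u = (t - s) * u := by
  simp only [kinkedLinear, min_eq_left (neg_nonpos.2 hu), max_eq_right (neg_nonpos.2 hu),
    min_eq_right hu, max_eq_left hu]
  ring

theorem integral_kinkedLinear_mul_nonpos {f : ℝ → ℝ} {a : ℝ} (hf : Continuous f)
    (hsymm : ∀ x, f x = f (-x)) (ha : 0 ≤ a) (hnonneg : ∀ x ∈ Set.Ioo 0 a, 0 ≤ f x)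
    (hts : t ≤ s) :
    ∫ x in -a..a, kinkedLinear s t x * f x ≤ 0 :=
  integral_mul_nonpos_of_symmetric hf continuous_kinkedLinear hsymm ha hnonneg fun x hx => by
    rw [kinkedLinear_neg_add_self hx.1.le]
    exact mul_nonpos_of_nonpos_of_nonneg (sub_nonpos.2 hts) hx.1.le

end KinkedLinear

theorem payoff_slope_bounds {γB γG y X δ LG LB : ℝ} (hγ : γB < γG) (hγG : γG < 1) (hy : 0 < y)
    (hδ0 : 0 ≤ δ) (hδ1 : δ ≤ 1) (hLG : LG = X - (1 - γG) * y) (hLGpos : 0 < LG)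
    (hLB : LB = (1 - γB) * y - X) (hLBpos : 0 < LB) :
    0 < -(1/2) * (δ * LB - (1 - γB) * y) ∧ 0 ≤ (1/2) * ((1 - γG) * y + δ * LG) ∧
      (1/2) * ((1 - γG) * y + δ * LG) ≤ -(1/2) * (δ * LB - (1 - γB) * y) := by
  subst hLG hLB
  refine ⟨?_, ?_, ?_⟩
  · nlinarith [mul_le_of_le_one_left hLBpos.le hδ1]
  · nlinarith [mul_nonneg hδ0 hLGpos.le]
  · nlinarith [mul_le_of_le_one_left (mul_nonneg (sub_nonneg.2 hγ.le) hy.le) hδ1]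

theorem stmt_4_general (f F : ℝ → ℝ)
    (hf_total : (∫ x in (-1 : ℝ)..1, f x) = 1)
    (hf_symm : ∀ x, f x = f (-x))
    (hf_cont : Continuous f)
    (hf_pos : ∀ x ∈ Set.Ioo (-1 : ℝ) 1, 0 < f x)
    (hF : ∀ x, F x = ∫ t in (-1 : ℝ)..x, f t)
    (γB γG y X τ κ LG LB K p xstar D₀ D₁ : ℝ)
    (hγB : 0 ≤ γB) (hγ : γB < γG) (hγG : γG < 1)
    (hy : 0 < y) (hτ0 : 0 ≤ τ) (hτ1 : τ ≤ 1)
    (hκ0 : 0 < κ) (hκ1 : κ < 1)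
    (hLG : LG = X - (1 - γG) * y) (hLGpos : 0 < LG)
    (hLB : LB = (1 - γB) * y - X) (hLBpos : 0 < LB)
    (hp : p ∈ Set.Ioo (0 : ℝ) 1) (hx : xstar ∈ Set.Ioo (-1 : ℝ) 0)
    (hFpos : 0 < F xstar)
    (A g Vempty Vw : ℝ → ℝ)
    (hA : ∀ D, A D = (1/2) * (γG + γB) * D + (1/2) * (1 - γB) * y)
    (hg : ∀ x : ℝ, g x = if x ≤ 0
      then (1/2) * (-x) * ((1-τ)*(1-κ)*LB - (1-γB)*y)
      else (1/2) * x * ((1-γG)*y + (1-τ)*(1-κ)*LG))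
    (hVempty : ∀ D, Vempty D = ∫ x in (-1 : ℝ)..1, (A D + g x) * f x)
    (hVw : ∀ D, Vw D = (1 / F xstar) * ∫ x in (-1 : ℝ)..xstar, (A D + g x) * f x)
    (hbe0 : (1 - p) * Vempty D₀ + p * F xstar * Vw D₀ = (1 - p + p * F xstar) * K)
    (hbe1 : A D₁ = K) :
    D₀ > D₁ ∧ Vempty D₀ > K := by
  obtain ⟨hp0, hp1⟩ := hp
  obtain ⟨hx1, hx0⟩ := hx
  obtain ⟨hs, ht, hts⟩ := payoff_slope_bounds (δ := (1 - τ) * (1 - κ)) hγ hγG hy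
    (mul_nonneg (by linarith) (by linarith)) (by nlinarith) hLG hLGpos hLB hLBpos
  set s := -(1/2) * ((1-τ)*(1-κ)*LB - (1-γB)*y)
  set t := (1/2) * ((1-γG)*y + (1-τ)*(1-κ)*LG)
  obtain rfl : g = kinkedLinear s t := funext fun x => by
    rw [hg, kinkedLinear_eq_ite]; split_ifs <;> ring
  have hgc : Continuous (kinkedLinear s t) := continuous_kinkedLinear
  have hG : ∫ x in (-1 : ℝ)..1, kinkedLinear s t x * f x ≤ 0 := by
    simpa using integral_kinkedLinear_mul_nonpos hf_cont hf_symm zero_le_one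
      (fun x hx => (hf_pos x ⟨by linarith [hx.1], hx.2⟩).le) hts
  have hmean := integral_mul_integral_lt_of_monotoneOn hf_cont hgc hx1 (hx0.trans zero_lt_one)
    hf_pos ((strictMonoOn_kinkedLinear hs).mono fun x hx => hx.2.trans hx0.le)
    ((monotone_kinkedLinear hs.le ht).monotoneOn _)
  rw [hf_total, ← hF, mul_one] at hmean
  set G := ∫ x in (-1 : ℝ)..1, kinkedLinear s t x * f x
  set Gw := ∫ x in (-1 : ℝ)..xstar, kinkedLinear s t x * f x
  have hVe : Vempty D₀ = A D₀ + G := by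
    rw [hVempty, intervalIntegral_add_mul hf_cont hgc, hf_total, mul_one]
  have hFVw : F xstar * Vw D₀ = A D₀ * F xstar + Gw := by
    rw [hVw, one_div, mul_inv_cancel_left₀ hFpos.ne', intervalIntegral_add_mul hf_cont hgc, ← hF]
  have hbreakeven : (1 - p + p * F xstar) * (Vempty D₀ - K) = p * (F xstar * G - Gw) := by
    linear_combination hbe0 + p * F xstar * hVe - p * hFVw
  have hVeK : Vempty D₀ > K := by
    have hS : 0 < 1 - p + p * F xstar := by nlinarith
    have h : 0 < (1 - p + p * F xstar) * (Vempty D₀ - K) := by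
      rw [hbreakeven]
      exact mul_pos hp0 (by linarith)
    linarith [pos_of_mul_pos_right h hS.le]
  refine ⟨?_, hVeK⟩
  have hAD : A D₁ < A D₀ := by linarith
  rw [hA, hA] at hAD
  nlinarith

/-- Under the lender's break-even conditions, the no-disclosure face value
exceeds the disclosure face value (D₀ > D₁), and the lender's expected payoff
conditional on the manager being uninformed exceeds the principal (V_∅(D₀) > K). -/
theorem stmt_4 (f F : ℝ → ℝ)
    (hf_nonneg : ∀ x, 0 ≤ f x)
    (hf_supp : ∀ x : ℝ, x ∉ Set.Icc (-1 : ℝ) 1 → f x = 0)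
    (hf_total : (∫ x in (-1 : ℝ)..1, f x) = 1)
    (hf_symm : ∀ x, f x = f (-x))
    (hf_cont : Continuous f)
    (hf_pos : ∀ x ∈ Set.Ioo (-1 : ℝ) 1, 0 < f x)
    (hF : ∀ x, F x = ∫ t in (-1 : ℝ)..x, f t)
    (γB γG y X τ κ LG LB K p xstar D₀ D₁ : ℝ)
    (hγB : 0 ≤ γB) (hγ : γB < γG) (hγG : γG < 1)
    (hy : 0 < y) (hX : 0 < X) (hτ0 : 0 ≤ τ) (hτ1 : τ ≤ 1)
    (hκ0 : 0 < κ) (hκ1 : κ < 1)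
    (hLG : LG = X - (1 - γG) * y) (hLGpos : 0 < LG)
    (hLB : LB = (1 - γB) * y - X) (hLBpos : 0 < LB)
    (hp : p ∈ Set.Ioo (0 : ℝ) 1) (hx : xstar ∈ Set.Ioo (-1 : ℝ) 0)
    (hFpos : 0 < F xstar)
    (A g Vempty Vw : ℝ → ℝ)
    (hA : ∀ D, A D = (1/2) * (γG + γB) * D + (1/2) * (1 - γB) * y)
    (hg : ∀ x : ℝ, g x = if x ≤ 0
      then (1/2) * (-x) * ((1-τ)*(1-κ)*LB - (1-γB)*y)
      else (1/2) * x * ((1-γG)*y + (1-τ)*(1-κ)*LG))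
    (hVempty : ∀ D, Vempty D = ∫ x in (-1 : ℝ)..1, (A D + g x) * f x)
    (hVw : ∀ D, Vw D = (1 / F xstar) * ∫ x in (-1 : ℝ)..xstar, (A D + g x) * f x)
    (hbe0 : (1 - p) * Vempty D₀ + p * F xstar * Vw D₀ = (1 - p + p * F xstar) * K)
    (hbe1 : A D₁ = K) :
    D₀ > D₁ ∧ Vempty D₀ > K :=
  stmt_4_general f F hf_total hf_symm hf_cont hf_pos hF γB γG y X τ κ LG LB K p xstar D₀ D₁ hγB hγ
    hγG hy hτ0 hτ1 hκ0 hκ1 hLG hLGpos hLB hLBpos hp hx hFpos A g Vempty Vw hA hg hVempty hVw hbe0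
    hbe1
end

section
/- Suppose D₀ > D₁ and γ_G + γ_B > 0. Then Δ(x) > 0 for every x ∈ [0,1]. Consequently, any threshold x* ∈ [-1,1] satisfying the indifference condition Δ(x*) = 0 must satisfy x* < 0; that is, in equilibrium the manager always discloses false alarm errors (Proposition 1). -/
/-- Proposition 1: If D₀ > D₁ and γ_G + γ_B > 0, then Δ(x) > 0 for all
x ∈ [0,1], so any indifference threshold x* with Δ(x*) = 0 satisfies x* < 0:
in equilibrium the manager always discloses false alarm errors. -/
theorem stmt_5 (γB γG y X τ κ LG LB D₀ D₁ : ℝ) (Δ : ℝ → ℝ)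
    (hγB : 0 ≤ γB) (hγ : γB < γG) (hγG : γG < 1)
    (hy : 0 < y) (hX : 0 < X) (hτ0 : 0 ≤ τ) (hτ1 : τ ≤ 1)
    (hκ0 : 0 < κ) (hκ1 : κ < 1)
    (hLG : LG = X - (1 - γG) * y) (hLGpos : 0 < LG)
    (hLB : LB = (1 - γB) * y - X) (hLBpos : 0 < LB)
    (hΔ : ∀ x : ℝ, Δ x = if x ≤ 0
      then (1/2) * (γG + γB) * (D₀ - D₁) + (1/2) * x * (X + τ * (1 - κ) * LB)
      else (1/2) * (γG + γB) * (D₀ - D₁) + (1/2) * x * (X - τ * (1 - κ) * LG))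
    (hD : D₀ > D₁) (hsum : 0 < γG + γB) :
    (∀ x ∈ Set.Icc (0 : ℝ) 1, 0 < Δ x) ∧
    (∀ xstar ∈ Set.Icc (-1 : ℝ) 1, Δ xstar = 0 → xstar < 0) := by
  have hfirst : (0:ℝ) < (1/2) * (γG + γB) * (D₀ - D₁) := by nlinarith
  have hcoef : 0 < X - τ * (1 - κ) * LG := by
    have h1 : τ * (1 - κ) * LG ≤ LG := by
      have : τ * (1 - κ) ≤ 1 := by nlinarith
      nlinarith
    have : 0 < X - LG := by rw [hLG]; nlinarith
    linarith
  have key : ∀ x ∈ Set.Icc (0 : ℝ) 1, 0 < Δ x := by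
    intro x hx
    rcases hx with ⟨hx0, hx1⟩
    rw [hΔ]
    by_cases h : x ≤ 0
    · simp [h]
      have : x = 0 := le_antisymm h hx0
      subst this
      simpa using hfirst
    · simp [h]
      push_neg at h
      nlinarith
  refine ⟨key, ?_⟩
  intro xstar hxs hzero
  by_contra hneg
  push_neg at hneg
  have := key xstar ⟨hneg, hxs.2⟩
  linarith
end

section
/- Fix 0 ≤ γ_B < γ_G < 1, y > 0, X > 0 with (1−γ_B)·y − X > 0, and p ∈ (0,1). Then the map τ ↦ x*(γ_B, γ_G, y, X, τ, p) is strictly decreasing on (0,1]: a larger managerial bargaining power strictly lowers the disclosure threshold (the manager withholds more undue optimism errors). -/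
set_option maxHeartbeats 1000000


/-- Under the uniform density on [-1,1] and κ = 0, the disclosure
threshold x* (the unique root in (−1,0) of the indifference equation
J(x) = p·C₁·(x+1)²/4 + p·(C₂−C₁)·x·(x+1)/2 + (1−p)·(C₂·x − C) = 0, where
C₁ = C₂ = (X + τ·L_B)/2 and C = −τ·(γ_G−γ_B)·y/8) is strictly decreasing in the
manager's bargaining power τ on (0,1]. -/
theorem stmt_13 (γB γG y X p : ℝ) (J : ℝ → ℝ → ℝ)
    (hγB : 0 ≤ γB) (hγ : γB < γG) (hγG : γG < 1)
    (hy : 0 < y) (hX : 0 < X) (hLB : 0 < (1 - γB) * y - X)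
    (hp : p ∈ Set.Ioo (0 : ℝ) 1)
    (hJ : ∀ τ x : ℝ, J τ x =
      p * ((X + τ * ((1 - γB) * y - X)) / 2) * (x + 1)^2 / 4
      + p * ((X + τ * ((1 - γB) * y - X)) / 2 - (X + τ * ((1 - γB) * y - X)) / 2)
          * x * (x + 1) / 2
      + (1 - p) * ((X + τ * ((1 - γB) * y - X)) / 2 * x - (-(τ * (γG - γB) * y / 8)))) :
    ∀ τ₁ ∈ Set.Ioc (0 : ℝ) 1, ∀ τ₂ ∈ Set.Ioc (0 : ℝ) 1, τ₁ < τ₂ →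
      ∀ x₁ ∈ Set.Ioo (-1 : ℝ) 0, ∀ x₂ ∈ Set.Ioo (-1 : ℝ) 0,
        J τ₁ x₁ = 0 → J τ₂ x₂ = 0 → x₂ < x₁ := by
  obtain ⟨hp0, hp1⟩ := hp
  intro τ₁ hτ₁ τ₂ hτ₂ hτ x₁ hx₁ x₂ hx₂ h1 h2
  rw [hJ] at h1 h2
  set L : ℝ := (1 - γB) * y - X with hLdef
  have hk : 0 < (γG - γB) * y := by nlinarith
  have hC1 : 0 < (X + τ₁ * L) / 2 := by nlinarith [hτ₁.1]
  have hC2 : 0 < (X + τ₂ * L) / 2 := by nlinarith [hτ₂.1]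
  -- J τ₂ x₁ > 0
  have key : 0 < p * ((X + τ₂ * L) / 2) * (x₁ + 1)^2 / 4
      + p * ((X + τ₂ * L) / 2 - (X + τ₂ * L) / 2) * x₁ * (x₁ + 1) / 2
      + (1 - p) * ((X + τ₂ * L) / 2 * x₁ - (-(τ₂ * (γG - γB) * y / 8))) := by
    have hid : (X + τ₁ * L) / 2 * (p * ((X + τ₂ * L) / 2) * (x₁ + 1)^2 / 4
        + p * ((X + τ₂ * L) / 2 - (X + τ₂ * L) / 2) * x₁ * (x₁ + 1) / 2
        + (1 - p) * ((X + τ₂ * L) / 2 * x₁ - (-(τ₂ * (γG - γB) * y / 8))))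
        = (1 - p) * ((γG - γB) * y / 8) * X * (τ₂ - τ₁) / 2 := by
      linear_combination ((X + τ₂ * L) / 2) * h1
    have hpos : 0 < (1 - p) * ((γG - γB) * y / 8) * X * (τ₂ - τ₁) / 2 := by
      have h1p : 0 < 1 - p := by linarith
      have : 0 < τ₂ - τ₁ := by linarith
      positivity
    by_contra hE
    push_neg at hE
    linarith [mul_nonneg hC1.le (neg_nonneg.2 hE)]
  -- monotonicity in x: if x₁ ≤ x₂ then J τ₂ x₁ ≤ J τ₂ x₂ = 0, contradiction
  by_contra h
  push_neg at h
  have h1p : 0 < 1 - p := by linarith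
  have hs : (0:ℝ) ≤ x₁ + x₂ + 2 := by nlinarith [hx₁.1, hx₂.1]
  nlinarith [key, h2,
    mul_nonneg hC2.le (mul_nonneg hp0.le (mul_nonneg (sub_nonneg.2 h) hs)),
    mul_nonneg hC2.le (mul_nonneg h1p.le (sub_nonneg.2 h))]
end

section
/- Fix γ_G ∈ (0,1), y > 0, X > 0, τ ∈ (0,1], and p ∈ (0,1). Then the map γ_B ↦ x*(γ_B, γ_G, y, X, τ, p) is strictly increasing on {γ_B ∈ [0, γ_G) : (1−γ_B)·y − X > 0}: a higher success probability in the bad state strictly raises the disclosure threshold. -/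
set_option maxHeartbeats 1000000 in
/-- Under the uniform density on [-1,1] and κ = 0, the disclosure
threshold x* (the unique root in (−1,0) of J(x) = p·C₁·(x+1)²/4
+ p·(C₂−C₁)·x·(x+1)/2 + (1−p)·(C₂·x − C) = 0, where C₁ = C₂ = (X + τ·L_B)/2 and
C = −τ·(γ_G−γ_B)·y/8, L_B = (1−γ_B)·y − X) is strictly increasing in the bad-state
success probability γ_B on {γ_B ∈ [0, γ_G) : (1−γ_B)·y − X > 0}. -/
theorem stmt_14 (γG y X τ p : ℝ) (J : ℝ → ℝ → ℝ)
    (hγG0 : 0 < γG) (hγG : γG < 1)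
    (hy : 0 < y) (hX : 0 < X)
    (hτ0 : 0 < τ) (hτ1 : τ ≤ 1)
    (hp : p ∈ Set.Ioo (0 : ℝ) 1)
    (hJ : ∀ γB x : ℝ, J γB x =
      p * ((X + τ * ((1 - γB) * y - X)) / 2) * (x + 1)^2 / 4
      + p * ((X + τ * ((1 - γB) * y - X)) / 2 - (X + τ * ((1 - γB) * y - X)) / 2)
          * x * (x + 1) / 2
      + (1 - p) * ((X + τ * ((1 - γB) * y - X)) / 2 * x - (-(τ * (γG - γB) * y / 8)))) :
    ∀ γB₁, 0 ≤ γB₁ → γB₁ < γG → 0 < (1 - γB₁) * y - X →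
    ∀ γB₂, 0 ≤ γB₂ → γB₂ < γG → 0 < (1 - γB₂) * y - X →
    γB₁ < γB₂ →
      ∀ x₁ ∈ Set.Ioo (-1 : ℝ) 0, ∀ x₂ ∈ Set.Ioo (-1 : ℝ) 0,
        J γB₁ x₁ = 0 → J γB₂ x₂ = 0 → x₁ < x₂ := by
  intro γB₁ h10 h1G hL1 γB₂ h20 h2G hL2 h12 x₁ hx₁ x₂ hx₂ hJ1 hJ2
  obtain ⟨hx₁l, hx₁r⟩ := hx₁
  obtain ⟨hx₂l, hx₂r⟩ := hx₂
  obtain ⟨hp0, hp1⟩ := hp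
  rw [hJ γB₁ x₁] at hJ1
  rw [hJ γB₂ x₂] at hJ2
  set c₁ : ℝ := (X + τ * ((1 - γB₁) * y - X)) / 2 with hc₁def
  set c₂ : ℝ := (X + τ * ((1 - γB₂) * y - X)) / 2 with hc₂def
  set d₁ : ℝ := τ * (γG - γB₁) * y / 8 with hd₁def
  set d₂ : ℝ := τ * (γG - γB₂) * y / 8 with hd₂def
  set A₁ : ℝ := p * (x₁ + 1) ^ 2 / 4 + (1 - p) * x₁ with hA₁def
  set A₂ : ℝ := p * (x₂ + 1) ^ 2 / 4 + (1 - p) * x₂ with hA₂def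
  have hc₁ : 0 < c₁ := by
    have := mul_pos hτ0 hL1
    rw [hc₁def]; linarith
  have hc₂ : 0 < c₂ := by
    have := mul_pos hτ0 hL2
    rw [hc₂def]; linarith
  -- root equations
  have e₁ : A₁ * c₁ = -((1 - p) * d₁) := by
    rw [hA₁def, hc₁def, hd₁def]
    rw [hc₁def, hd₁def] at hJ1
    linear_combination hJ1
  have e₂ : A₂ * c₂ = -((1 - p) * d₂) := by
    rw [hA₂def, hc₂def, hd₂def]
    rw [hc₂def, hd₂def] at hJ2
    linear_combination hJ2
  -- key cross inequality: d₂ * c₁ < d₁ * c₂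
  have key : d₂ * c₁ < d₁ * c₂ := by
    rw [hc₁def, hc₂def, hd₁def, hd₂def]
    nlinarith [mul_pos (mul_pos (mul_pos hτ0 hy) (sub_pos.2 h12))
        (mul_pos (mul_pos hτ0 hy) (sub_pos.2 hγG)),
      mul_nonneg (mul_nonneg (mul_nonneg hτ0.le hy.le) (sub_pos.2 h12).le)
        (mul_nonneg hX.le (sub_nonneg.2 hτ1))]
  by_contra hcon
  push_neg at hcon
  -- then A₂ ≤ A₁
  have hA : A₂ ≤ A₁ := by
    rw [hA₁def, hA₂def]
    nlinarith [mul_nonneg (mul_nonneg hp0.le (sub_nonneg.2 hcon))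
      (by linarith : (0:ℝ) ≤ x₁ + x₂ + 2)]
  -- A₁ * c₁ * c₂ < A₂ * c₂ * c₁, contradiction
  have h1p : (0:ℝ) < 1 - p := by linarith
  have strict : A₁ * c₁ * c₂ < A₂ * c₂ * c₁ := by
    rw [e₁, e₂]
    nlinarith [mul_lt_mul_of_pos_left key h1p]
  nlinarith [mul_le_mul_of_nonneg_right (mul_le_mul_of_nonneg_right hA hc₂.le) hc₁.le]
end

section
/- Suppose C₁ ≥ C₂ > 0 and C < 0. Let p₁ < p₂ in (0,1), and for i = 1,2 let x*ᵢ ∈ (−1,0) satisfy J(x*ᵢ; pᵢ) = 0, where J(·; p₂) is strictly increasing on [−1,0]. Then x*₂ < x*₁: the disclosure threshold is strictly decreasing in the probability p that the manager becomes informed. -/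
open MeasureTheory

/-! At a root `x₁` of `J(·; p₁)` write `J(x₁; p) = p·A + (1 - p)·B`, affine in `p`. The informed
part `A = C₁ ∫_{-1}^{x₁} F + (C₂ - C₁) x₁ F(x₁)` is positive, so `J(x₁; p₁) = 0` forces `B < 0`;
hence `J(x₁; ·)` is strictly increasing in `p` and `J(x₁; p₂) > 0 = J(x₂; p₂)`. Since `J(·; p₂)`
is strictly increasing, `x₂ < x₁`. -/

lemma intervalIntegral_primitive_pos {f : ℝ → ℝ} {a b x : ℝ} (hf : Continuous f)
    (hpos : ∀ t ∈ Set.Ioo a b, 0 < f t) (hax : a < x) (hxb : x ≤ b) :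
    0 < ∫ t in a..x, f t :=
  intervalIntegral.intervalIntegral_pos_of_pos_on (hf.intervalIntegrable a x)
    (fun t ht => hpos t ⟨ht.1, ht.2.trans_le hxb⟩) hax

lemma informedPart_pos {F : ℝ → ℝ} {C₁ C₂ a x : ℝ} (hF : Continuous F)
    (hFpos : ∀ t ∈ Set.Ioc a x, 0 < F t) (hC₁₂ : C₂ ≤ C₁) (hC₂ : 0 < C₂) (hax : a < x)
    (hx : x ≤ 0) :
    0 < C₁ * (∫ t in a..x, F t) + (C₂ - C₁) * x * F x := by
  have hI : 0 < ∫ t in a..x, F t :=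
    intervalIntegral.intervalIntegral_pos_of_pos_on (hF.intervalIntegrable a x)
      (fun t ht => hFpos t (Set.Ioo_subset_Ioc_self ht)) hax
  have hFx : 0 ≤ F x := (hFpos x ⟨hax, le_rfl⟩).le
  have hlin : 0 ≤ (C₂ - C₁) * x := mul_nonneg_of_nonpos_of_nonpos (by linarith) hx
  nlinarith [mul_nonneg hlin hFx, mul_pos (hC₂.trans_le hC₁₂) hI]

lemma mix_pos_of_mix_eq_zero {A B p₁ p₂ : ℝ} (hA : 0 < A) (hp₁ : p₁ ∈ Set.Ioo (0 : ℝ) 1)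
    (hpp : p₁ < p₂) (hroot : p₁ * A + (1 - p₁) * B = 0) :
    0 < p₂ * A + (1 - p₂) * B := by
  obtain ⟨hp₁0, hp₁1⟩ := hp₁
  have hB : B < 0 := by nlinarith [mul_pos hp₁0 hA]
  nlinarith [mul_pos (sub_pos.2 hpp) (sub_pos.2 (hB.trans hA))]

theorem stmt_17_general (f F : ℝ → ℝ)
    (hf_cont : Continuous f)
    (hf_pos : ∀ x ∈ Set.Ioo (-1 : ℝ) 1, 0 < f x)
    (hF : ∀ x, F x = ∫ t in (-1 : ℝ)..x, f t)
    (C₁ C₂ C : ℝ) (J : ℝ → ℝ → ℝ)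
    (hC₁₂ : C₂ ≤ C₁) (hC₂ : 0 < C₂)
    (hJ : ∀ x p : ℝ, J x p = p * C₁ * (∫ t in (-1 : ℝ)..x, F t)
      + p * (C₂ - C₁) * x * F x + (1 - p) * (C₂ * x - C))
    (p₁ p₂ x₁ x₂ : ℝ)
    (hp₁ : p₁ ∈ Set.Ioo (0 : ℝ) 1) (hpp : p₁ < p₂)
    (hx₁ : x₁ ∈ Set.Ioo (-1 : ℝ) 0) (hx₂ : x₂ ∈ Set.Ioo (-1 : ℝ) 0)
    (hroot₁ : J x₁ p₁ = 0) (hroot₂ : J x₂ p₂ = 0)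
    (hmono : StrictMonoOn (fun x => J x p₂) (Set.Icc (-1 : ℝ) 0)) :
    x₂ < x₁ := by
  have hFcont : Continuous F := by
    rw [funext hF]
    exact intervalIntegral.continuous_primitive (fun a b => hf_cont.intervalIntegrable a b) (-1)
  have hFpos : ∀ t ∈ Set.Ioc (-1 : ℝ) x₁, 0 < F t := fun t ht => by
    rw [hF]
    exact intervalIntegral_primitive_pos hf_cont hf_pos ht.1 (by linarith [ht.2, hx₁.2])
  have hA := informedPart_pos hFcont hFpos hC₁₂ hC₂ hx₁.1 hx₁.2.le
  have hsplit : ∀ p, J x₁ p = p * (C₁ * (∫ t in (-1 : ℝ)..x₁, F t) + (C₂ - C₁) * x₁ * F x₁)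
      + (1 - p) * (C₂ * x₁ - C) := fun p => by rw [hJ]; ring
  have hJ₁ : J x₂ p₂ < J x₁ p₂ := by
    rw [hroot₂, hsplit]
    exact mix_pos_of_mix_eq_zero hA hp₁ hpp (hsplit p₁ ▸ hroot₁)
  exact (hmono.lt_iff_lt (Set.Ioo_subset_Icc_self hx₂) (Set.Ioo_subset_Icc_self hx₁)).1 hJ₁

/-- The disclosure threshold is strictly decreasing in the probability p
that the manager becomes informed: if p₁ < p₂ and x*ᵢ ∈ (−1,0) are roots of
J(·; pᵢ) = 0, with J(·; p₂) strictly increasing on [−1,0], then x*₂ < x*₁. -/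
theorem stmt_17 (f F : ℝ → ℝ)
    (hf_nonneg : ∀ x, 0 ≤ f x)
    (hf_supp : ∀ x : ℝ, x ∉ Set.Icc (-1 : ℝ) 1 → f x = 0)
    (hf_total : (∫ x in (-1 : ℝ)..1, f x) = 1)
    (hf_symm : ∀ x, f x = f (-x))
    (hf_cont : Continuous f)
    (hf_pos : ∀ x ∈ Set.Ioo (-1 : ℝ) 1, 0 < f x)
    (hF : ∀ x, F x = ∫ t in (-1 : ℝ)..x, f t)
    (C₁ C₂ C : ℝ) (J : ℝ → ℝ → ℝ)
    (hC₁₂ : C₂ ≤ C₁) (hC₂ : 0 < C₂) (hC : C < 0)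
    (hJ : ∀ x p : ℝ, J x p = p * C₁ * (∫ t in (-1 : ℝ)..x, F t)
      + p * (C₂ - C₁) * x * F x + (1 - p) * (C₂ * x - C))
    (p₁ p₂ x₁ x₂ : ℝ)
    (hp₁ : p₁ ∈ Set.Ioo (0 : ℝ) 1) (hp₂ : p₂ ∈ Set.Ioo (0 : ℝ) 1) (hpp : p₁ < p₂)
    (hx₁ : x₁ ∈ Set.Ioo (-1 : ℝ) 0) (hx₂ : x₂ ∈ Set.Ioo (-1 : ℝ) 0)
    (hroot₁ : J x₁ p₁ = 0) (hroot₂ : J x₂ p₂ = 0)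
    (hmono : StrictMonoOn (fun x => J x p₂) (Set.Icc (-1 : ℝ) 0)) :
    x₂ < x₁ :=
  stmt_17_general f F hf_cont hf_pos hF C₁ C₂ C J hC₁₂ hC₂ hJ p₁ p₂ x₁ x₂ hp₁ hpp hx₁ hx₂ hroot₁
    hroot₂ hmono
end

section
/- Suppose C₁ ≥ C₂ > 0 and p ∈ (0,1). Let C^a < C^b be two values of the constant C, and for i ∈ {a,b} let x*ᵢ ∈ (−1,0) satisfy J(x*ᵢ; Cⁱ) = 0, where J(·; C^a) is strictly increasing on [−1,0]. Then x*_a < x*_b. Consequently, since C(γ_G) = (1/2)·((1−τ)·(1−κ) − 1)·(γ_G − γ_B)·y·∫_{0}^{1} x·f(x) dx is strictly decreasing in γ_G for τ ∈ [0,1], κ ∈ (0,1), γ_G > γ_B, y > 0, the disclosure threshold is strictly decreasing in γ_G: a higher success probability in the good state makes the manager withhold more undue optimism errors. -/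
open MeasureTheory

/-- The disclosure threshold is strictly increasing in the constant C:
if C^a < C^b and x*ᵢ ∈ (−1,0) are roots of J(·; Cⁱ) = 0, with J(·; C^a) strictly
increasing on [−1,0], then x*_a < x*_b. Moreover, since C(γ_G) = (1/2)·((1−τ)(1−κ)−1)
·(γ_G−γ_B)·y·∫₀¹ x f(x) dx is strictly decreasing in γ_G on (γ_B, ∞), the disclosure
threshold is strictly decreasing in γ_G. -/
theorem stmt_18 (f F : ℝ → ℝ)
    (hf_nonneg : ∀ x, 0 ≤ f x)
    (hf_supp : ∀ x : ℝ, x ∉ Set.Icc (-1 : ℝ) 1 → f x = 0)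
    (hf_total : (∫ x in (-1 : ℝ)..1, f x) = 1)
    (hf_symm : ∀ x, f x = f (-x))
    (hf_cont : Continuous f)
    (hf_pos : ∀ x ∈ Set.Ioo (-1 : ℝ) 1, 0 < f x)
    (hF : ∀ x, F x = ∫ t in (-1 : ℝ)..x, f t)
    (p C₁ C₂ : ℝ) (J : ℝ → ℝ → ℝ)
    (hp : p ∈ Set.Ioo (0 : ℝ) 1)
    (hC₁₂ : C₂ ≤ C₁) (hC₂ : 0 < C₂)
    (hJ : ∀ x C : ℝ, J x C = p * C₁ * (∫ t in (-1 : ℝ)..x, F t)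
      + p * (C₂ - C₁) * x * F x + (1 - p) * (C₂ * x - C))
    (Ca Cb xa xb : ℝ) (hCab : Ca < Cb)
    (hxa : xa ∈ Set.Ioo (-1 : ℝ) 0) (hxb : xb ∈ Set.Ioo (-1 : ℝ) 0)
    (hroota : J xa Ca = 0) (hrootb : J xb Cb = 0)
    (hmono : StrictMonoOn (fun x => J x Ca) (Set.Icc (-1 : ℝ) 0))
    (τ κ γB y : ℝ)
    (hτ0 : 0 ≤ τ) (hτ1 : τ ≤ 1) (hκ0 : 0 < κ) (hκ1 : κ < 1) (hy : 0 < y)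
    (Cfun : ℝ → ℝ)
    (hCfun : ∀ g : ℝ, Cfun g =
      (1/2) * ((1 - τ) * (1 - κ) - 1) * (g - γB) * y * (∫ x in (0 : ℝ)..1, x * f x)) :
    xa < xb ∧ StrictAntiOn Cfun (Set.Ioi γB) := by

  constructor
  · -- J xb Ca > 0 since Ca < Cb
    have h1 : J xb Ca = J xb Cb + (1 - p) * (Cb - Ca) := by
      rw [hJ, hJ]; ring
    have hp1 : 0 < 1 - p := by linarith [hp.2]
    have h2 : J xa Ca < J xb Ca := by
      rw [h1, hrootb, hroota]
      nlinarith
    by_contra h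
    push_neg at h
    rcases eq_or_lt_of_le h with h | h
    · rw [h] at h2; exact lt_irrefl _ h2
    · have := hmono (Set.mem_Icc.2 ⟨le_of_lt hxb.1, le_of_lt hxb.2⟩)
        (Set.mem_Icc.2 ⟨le_of_lt hxa.1, le_of_lt hxa.2⟩) h
      simp only at this
      linarith
  · -- the integral is positive
    have hint : 0 < ∫ x in (0 : ℝ)..1, x * f x := by
      apply intervalIntegral.intervalIntegral_pos_of_pos_on
      · exact (continuous_id.mul hf_cont).intervalIntegrable 0 1
      · intro x hx
        exact mul_pos hx.1 (hf_pos x ⟨by linarith [hx.1], hx.2⟩)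
      · norm_num
    have hK : (1 - τ) * (1 - κ) - 1 < 0 := by nlinarith
    intro a _ b hb hab
    rw [hCfun, hCfun]
    have hbB : γB < b := hb
    have hKI : (1/2) * ((1 - τ) * (1 - κ) - 1) * y * (∫ x in (0 : ℝ)..1, x * f x) < 0 := by
      nlinarith [mul_pos hy hint, mul_pos (mul_pos hy hint) (neg_pos.2 hK)]
    nlinarith [hKI, hab]
end

section
/- Let f be a probability density supported on [-1,1], x* ∈ (−1,0), and real numbers W_FB, K, R, V_∅ with R ≥ 0 and V_∅ > K. Let u : [−1,1] → ℝ be integrable with respect to f with u(x) = W_FB − K for all x ∈ (x*, 1] and u(x) ≥ W_FB − K for all x ∈ [−1, x*], and set u_∅ = W_FB − R − V_∅. Let c : [0,1] → ℝ be differentiable with strictly increasing derivative c′, and suppose p^FB, p* ∈ (0,1) satisfy the first-order conditions c′(p^FB) = R and c′(p*) = ∫_{−1}^{1} u(x)·f(x) dx − u_∅. Then c′(p*) > c′(p^FB) and hence p* > p^FB: the manager over-invests in information acquisition relative to the first-best level (Proposition 4). -/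
open MeasureTheory

/-- Proposition 4: The manager over-invests in information acquisition.
With u(x) = W_FB − K on the disclosure region (x*,1], u(x) ≥ W_FB − K on the
withholding region [−1,x*], u_∅ = W_FB − R − V_∅ with V_∅ > K and R ≥ 0, and first-order
conditions c′(p^FB) = R and c′(p*) = ∫ u·f − u_∅, we get c′(p*) > c′(p^FB) and hence
p* > p^FB by strict monotonicity of c′. -/
theorem stmt_19 (f : ℝ → ℝ)
    (hf_nonneg : ∀ x, 0 ≤ f x)
    (hf_supp : ∀ x : ℝ, x ∉ Set.Icc (-1 : ℝ) 1 → f x = 0)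
    (hf_total : (∫ x in (-1 : ℝ)..1, f x) = 1)
    (hf_int : IntervalIntegrable f volume (-1) 1)
    (xstar WFB K R Vempty uempty : ℝ)
    (hx : xstar ∈ Set.Ioo (-1 : ℝ) 0)
    (hR : 0 ≤ R) (hV : K < Vempty)
    (u : ℝ → ℝ)
    (hu_int : IntervalIntegrable (fun x => u x * f x) volume (-1) 1)
    (hu_disc : ∀ x ∈ Set.Ioc xstar (1 : ℝ), u x = WFB - K)
    (hu_with : ∀ x ∈ Set.Icc (-1 : ℝ) xstar, WFB - K ≤ u x)
    (huempty : uempty = WFB - R - Vempty)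
    (c : ℝ → ℝ) (hc : DifferentiableOn ℝ c (Set.Icc (0 : ℝ) 1))
    (hc' : StrictMonoOn (deriv c) (Set.Icc (0 : ℝ) 1))
    (pFB pstar : ℝ)
    (hpFB : pFB ∈ Set.Ioo (0 : ℝ) 1) (hpstar : pstar ∈ Set.Ioo (0 : ℝ) 1)
    (hfocFB : deriv c pFB = R)
    (hfoc : deriv c pstar = (∫ x in (-1 : ℝ)..1, u x * f x) - uempty) :
    deriv c pFB < deriv c pstar ∧ pFB < pstar := by
  have hmono : (WFB - K) * (∫ x in (-1 : ℝ)..1, f x)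
      ≤ ∫ x in (-1 : ℝ)..1, u x * f x := by
    rw [← intervalIntegral.integral_const_mul]
    apply intervalIntegral.integral_mono_on (by norm_num) (hf_int.const_mul _) hu_int
    intro x hxm
    rcases le_or_gt x xstar with h | h
    · exact mul_le_mul_of_nonneg_right (hu_with x ⟨hxm.1, h⟩) (hf_nonneg x)
    · rw [hu_disc x ⟨h, hxm.2⟩]
  rw [hf_total, mul_one] at hmono
  have hlt : deriv c pFB < deriv c pstar := by
    rw [hfocFB, hfoc, huempty]
    have : R + (Vempty - K) ≤ (∫ x in (-1 : ℝ)..1, u x * f x) - (WFB - R - Vempty) := by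
      linarith
    linarith
  refine ⟨hlt, ?_⟩
  have h1 : pFB ∈ Set.Icc (0:ℝ) 1 := ⟨hpFB.1.le, hpFB.2.le⟩
  have h2 : pstar ∈ Set.Icc (0:ℝ) 1 := ⟨hpstar.1.le, hpstar.2.le⟩
  exact (hc'.lt_iff_lt h1 h2).mp hlt
end
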